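/- If 0 is a global minimizer of M(s) = f0 + gᵀs + (1/2)sᵀHs + (β/6)‖s‖³ + (σ/4)‖s‖⁴ (σ ≥ 0), then M(s) - f0 can be written as (1/2)sᵀ(H - λ_min I)s + p(‖s‖)² + ‖s‖ q(‖s‖)² for some polynomials p of degree ≤ 2 and q of degree ≤ 1, where λ_min is the smallest eigenvalue of H and H - λ_min I ⪰ 0. -/

import Mathlib

/-!
First-order optimality at `0` forces `g = 0`. Along an eigenvector for `λ_min` the form
`sᵀ(H - λ_min I)s` vanishes, so `φ(r) = (λ_min/2) r² + (β/6) r³ + (σ/4) r⁴` is `≥ 0` on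
`[0, ∞)`. Letting `r → 0` in `φ(r)/r²` gives `λ_min ≥ 0`, and a discriminant argument gives
`β/6 + 2 √(σ/4) √(λ_min/2) ≥ 0`, which is exactly what the certificate
`φ(r) = (√(σ/4) r² - √(λ_min/2) r)² + r (√(β/6 + 2 √(σ/4) √(λ_min/2)) r)²` needs.
Finally `M(s) - f0 = ½ sᵀ(H - λ_min I)s + φ(‖s‖)` identically.
-/

open Matrix Polynomial

noncomputable def enormFin {n : ℕ} (s : Fin n → ℝ) : ℝ := Real.sqrt (s ⬝ᵥ s)

noncomputable def Mfun {n : ℕ} (f0 : ℝ) (g : Fin n → ℝ)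
    (H : Matrix (Fin n) (Fin n) ℝ) (β σ : ℝ) (s : Fin n → ℝ) : ℝ :=
  f0 + g ⬝ᵥ s + (1/2) * (s ⬝ᵥ (H *ᵥ s)) + (β/6) * enormFin s ^ 3 + (σ/4) * enormFin s ^ 4

noncomputable def Bmat {n : ℕ} (H : Matrix (Fin n) (Fin n) ℝ) (β σ : ℝ)
    (s : Fin n → ℝ) : Matrix (Fin n) (Fin n) ℝ :=
  H + ((β/2) * enormFin s) • (1 : Matrix (Fin n) (Fin n) ℝ)
    + (σ * enormFin s ^ 2) • (1 : Matrix (Fin n) (Fin n) ℝ)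

namespace Matrix

variable {ι R : Type*} [Fintype ι] [DecidableEq ι]

lemma dotProduct_sub_smul_one_mulVec [CommRing R] (H : Matrix ι ι R) (c : R) (s : ι → R) :
    s ⬝ᵥ ((H - c • 1) *ᵥ s) = s ⬝ᵥ (H *ᵥ s) - c * (s ⬝ᵥ s) := by
  rw [sub_mulVec, smul_mulVec, one_mulVec, dotProduct_sub, dotProduct_smul, smul_eq_mul]

lemma posSemidef_sub_smul_one_of_le [CommRing R] [PartialOrder R] [IsOrderedAddMonoid R]
    [StarRing R] [TrivialStar R] {H : Matrix ι ι R} (hH : H.IsSymm) {c : R}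
    (hle : ∀ v : ι → R, c * (v ⬝ᵥ v) ≤ v ⬝ᵥ (H *ᵥ v)) :
    (H - c • 1).PosSemidef := by
  refine .of_dotProduct_mulVec_nonneg ?_ fun x => ?_
  · exact (isHermitian_iff_isSymm.mpr hH).sub (isHermitian_one.smul (IsSelfAdjoint.all c))
  · rw [star_trivial, dotProduct_sub_smul_one_mulVec, sub_nonneg]
    exact hle x

end Matrix

lemma nonneg_of_forall_pos_of_continuous {f : ℝ → ℝ} (hf : Continuous f)
    (h : ∀ t > 0, 0 ≤ f t) : 0 ≤ f 0 :=
  ge_of_tendsto (hf.continuousWithinAt (s := Set.Ioi 0)) (eventually_nhdsWithin_of_forall h)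

lemma add_two_mul_sqrt_mul_sqrt_nonneg {a b c : ℝ} (ha : 0 ≤ a) (hc : 0 ≤ c)
    (h : ∀ r > 0, 0 ≤ c + b * r + a * r ^ 2) : 0 ≤ b + 2 * √a * √c := by
  by_contra! hneg
  have hb : b < 0 := by nlinarith [Real.sqrt_nonneg a, Real.sqrt_nonneg c]
  rcases ha.eq_or_lt with rfl | ha
  · have hr := h ((c + 1) / -b) (div_pos (by linarith) (by linarith))
    have : b * ((c + 1) / -b) = -(c + 1) := by field_simp [hb.ne]
    linarith
  · have hr := h (-b / (2 * a)) (div_pos (by linarith) (by linarith))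
    have hdisc : b ^ 2 ≤ 4 * a * c := by
      have : 4 * a * (c + b * (-b / (2 * a)) + a * (-b / (2 * a)) ^ 2) = 4 * a * c - b ^ 2 := by
        field_simp; ring
      nlinarith [mul_nonneg (by positivity : (0 : ℝ) ≤ 4 * a) hr]
    have hsq : (2 * √a * √c) ^ 2 = 4 * a * c := by
      rw [mul_pow, mul_pow, Real.sq_sqrt ha.le, Real.sq_sqrt hc]; ring
    nlinarith [mul_self_lt_mul_self (by positivity : 0 ≤ 2 * √a * √c)
      (by linarith : 2 * √a * √c < -b)]

lemma exists_sq_add_mul_sq_of_nonneg {a b c : ℝ} (ha : 0 ≤ a)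
    (h : ∀ r ≥ 0, 0 ≤ c * r ^ 2 + b * r ^ 3 + a * r ^ 4) :
    ∃ p q : ℝ[X], p.degree ≤ 2 ∧ q.degree ≤ 1 ∧
      ∀ r, c * r ^ 2 + b * r ^ 3 + a * r ^ 4 = p.eval r ^ 2 + r * q.eval r ^ 2 := by
  have h' : ∀ r > 0, 0 ≤ c + b * r + a * r ^ 2 := fun r hr =>
    nonneg_of_mul_nonneg_left (b := r ^ 2) (by linear_combination h r hr.le) (by positivity)
  have hc : 0 ≤ c := by
    simpa using nonneg_of_forall_pos_of_continuous (by fun_prop) h'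
  have hd := add_two_mul_sqrt_mul_sqrt_nonneg ha hc h'
  refine ⟨C √a * X ^ 2 - C √c * X, C √(b + 2 * √a * √c) * X,
    by compute_degree, by compute_degree, fun r => ?_⟩
  simp only [eval_sub, eval_mul, eval_pow, eval_C, eval_X]
  linear_combination (-r ^ 4) * Real.sq_sqrt ha - r ^ 2 * Real.sq_sqrt hc - r ^ 3 * Real.sq_sqrt hd

section Mfun

variable {n : ℕ}

lemma enormFin_sq (s : Fin n → ℝ) : enormFin s ^ 2 = s ⬝ᵥ s :=
  Real.sq_sqrt (Finset.sum_nonneg fun i _ => mul_self_nonneg (s i))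

lemma enormFin_pos {s : Fin n → ℝ} (hs : s ≠ 0) : 0 < enormFin s :=
  Real.sqrt_pos.mpr (by simpa using dotProduct_star_self_pos_iff.mpr hs)

lemma enormFin_smul (t : ℝ) (s : Fin n → ℝ) : enormFin (t • s) = |t| * enormFin s := by
  rw [enormFin, enormFin, smul_dotProduct, dotProduct_smul, smul_eq_mul, smul_eq_mul, ← mul_assoc,
    Real.sqrt_mul (mul_self_nonneg t), Real.sqrt_mul_self_eq_abs]

variable (f0 : ℝ) (g : Fin n → ℝ) (H : Matrix (Fin n) (Fin n) ℝ) (β σ : ℝ)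

lemma Mfun_zero : Mfun f0 g H β σ 0 = f0 := by
  simp [Mfun, enormFin]

lemma Mfun_sub_eq (c : ℝ) (s : Fin n → ℝ) :
    Mfun f0 g H β σ s - f0 = g ⬝ᵥ s + 1 / 2 * (s ⬝ᵥ ((H - c • 1) *ᵥ s))
      + (c / 2 * enormFin s ^ 2 + β / 6 * enormFin s ^ 3 + σ / 4 * enormFin s ^ 4) := by
  rw [dotProduct_sub_smul_one_mulVec, ← enormFin_sq, Mfun]
  ring

variable {f0 g H β σ}

lemma eq_zero_of_forall_Mfun_zero_le (hmin : ∀ s, Mfun f0 g H β σ 0 ≤ Mfun f0 g H β σ s) :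
    g = 0 := by
  set e := enormFin g
  set K := g ⬝ᵥ (H *ᵥ g)
  -- `(M(-t g) - f0) / t`
  have hray : ∀ t > 0,
      0 ≤ -(g ⬝ᵥ g) + t * (K / 2) + t ^ 2 * (β / 6 * e ^ 3) + t ^ 3 * (σ / 4 * e ^ 4) := by
    intro t ht
    have h := sub_nonneg.mpr (hmin ((-t) • g))
    rw [Mfun_zero, Mfun, enormFin_smul, abs_neg, abs_of_pos ht] at h
    simp only [mulVec_smul, dotProduct_smul, smul_dotProduct, smul_eq_mul] at h
    exact nonneg_of_mul_nonneg_right (by linear_combination h) ht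
  have hg : 0 ≤ -(g ⬝ᵥ g) := by
    simpa using nonneg_of_forall_pos_of_continuous (by fun_prop) hray
  exact dotProduct_self_eq_zero.mp (le_antisymm (neg_nonneg.mp hg) (enormFin_sq g ▸ sq_nonneg e))

lemma quartic_nonneg_of_forall_Mfun_zero_le {lam : ℝ}
    (heig : ∃ v : Fin n → ℝ, v ≠ 0 ∧ H *ᵥ v = lam • v)
    (hmin : ∀ s, Mfun f0 0 H β σ 0 ≤ Mfun f0 0 H β σ s) (r : ℝ) (hr : 0 ≤ r) :
    0 ≤ lam / 2 * r ^ 2 + β / 6 * r ^ 3 + σ / 4 * r ^ 4 := by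
  obtain ⟨v, hv, hHv⟩ := heig
  have hw := enormFin_pos hv
  set s := (r / enormFin v) • v
  have hs : enormFin s = r := by
    rw [enormFin_smul, abs_of_nonneg (by positivity), div_mul_cancel₀ r hw.ne']
  have hker : (H - lam • 1) *ᵥ s = 0 := by
    rw [mulVec_smul, sub_mulVec, smul_mulVec, one_mulVec, hHv, sub_self, smul_zero]
  have h := sub_nonneg.mpr (hmin s)
  rwa [Mfun_zero, Mfun_sub_eq f0 0 H β σ lam, hker, hs, zero_dotProduct, dotProduct_zero,
    mul_zero, zero_add, zero_add] at h

end Mfun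

theorem stmt8 {n : ℕ} (f0 : ℝ) (g : Fin n → ℝ) (H : Matrix (Fin n) (Fin n) ℝ)
    (hH : H.IsSymm) (β σ : ℝ) (hσ : 0 ≤ σ) (lamMin : ℝ)
    (heig : ∃ v : Fin n → ℝ, v ≠ 0 ∧ H *ᵥ v = lamMin • v)
    (hlow : ∀ v : Fin n → ℝ, lamMin * (v ⬝ᵥ v) ≤ v ⬝ᵥ (H *ᵥ v))
    (hmin : ∀ s : Fin n → ℝ, Mfun f0 g H β σ 0 ≤ Mfun f0 g H β σ s) :
    (H - lamMin • (1 : Matrix (Fin n) (Fin n) ℝ)).PosSemidef ∧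
    ∃ p q : Polynomial ℝ, p.degree ≤ 2 ∧ q.degree ≤ 1 ∧
      ∀ s : Fin n → ℝ,
        Mfun f0 g H β σ s - f0 =
          (1/2) * (s ⬝ᵥ ((H - lamMin • (1 : Matrix (Fin n) (Fin n) ℝ)) *ᵥ s))
            + (p.eval (enormFin s))^2 + enormFin s * (q.eval (enormFin s))^2 := by
  obtain rfl := eq_zero_of_forall_Mfun_zero_le hmin
  obtain ⟨p, q, hp, hq, hpq⟩ := exists_sq_add_mul_sq_of_nonneg (by positivity : 0 ≤ σ / 4)
    (quartic_nonneg_of_forall_Mfun_zero_le heig hmin)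
  refine ⟨posSemidef_sub_smul_one_of_le hH hlow, p, q, hp, hq, fun s => ?_⟩
  rw [Mfun_sub_eq f0 0 H β σ lamMin, hpq, zero_dotProduct]
  ring
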